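/- Let n ≥ 2 and let β₀ ∈ ℂ∖{0} be such that the iterates g_{β₀}^k(c₁) are defined and avoid Λ for 1 ≤ k ≤ n−1, and ℘′(g_{β₀}^k(c₁)) ≠ 0 for 1 ≤ k ≤ n−1. Then the map h_n : β ↦ g_β^n(c₁) is complex-differentiable at β₀ and h_n′(β₀) = (1/β₀) · ∏_{k=1}^{n−1} g_{β₀}′(g_{β₀}^k(c₁)) · [ g_{β₀}(c₁) + Σ_{k=2}^{n} g_{β₀}^k(c₁) / ∏_{i=1}^{k−1} g_{β₀}′(g_{β₀}^i(c₁)) ], where g_β′(z) = β℘′(z). -/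

import Mathlib

open Complex Filter
open scoped ENNReal

/-- `γ₃ = e^{2πi/3}`. -/
noncomputable def gam3 : ℂ := Complex.exp (2 * Real.pi * Complex.I / 3)

/-- The triangular lattice `Λ = {lλ₁ + m·γ₃λ₁ : l, m ∈ ℤ}` generated by `λ₁`. -/
def lattice (l1 : ℂ) : Set ℂ :=
  {z | ∃ l m : ℤ, z = (l : ℂ) * l1 + (m : ℂ) * (gam3 * l1)}

/-- The Weierstrass function of the triangular lattice generated by `λ₁`. -/
noncomputable def wp (l1 : ℂ) (z : ℂ) : ℂ :=
  1 / z ^ 2 + ∑' p : ℤ × ℤ,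
    if p = 0 then 0
    else 1 / (z - ((p.1 : ℂ) * l1 + (p.2 : ℂ) * (gam3 * l1))) ^ 2
         - 1 / ((p.1 : ℂ) * l1 + (p.2 : ℂ) * (gam3 * l1)) ^ 2

/-- The derivative `℘′` of the Weierstrass function. -/
noncomputable def wp' (l1 : ℂ) (z : ℂ) : ℂ :=
  -2 * ∑' p : ℤ × ℤ, 1 / (z - ((p.1 : ℂ) * l1 + (p.2 : ℂ) * (gam3 * l1))) ^ 3

/-- The orbit of `c` under `g_β = β·℘`. -/
noncomputable def orb (l1 β c : ℂ) : ℕ → ℂ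
  | 0 => c
  | n + 1 => β * wp l1 (orb l1 β c n)

/-!
Off the lattice, `wp l1` is Mathlib's Weierstrass function of the period pair `(λ₁, γλ₁)`, hence
holomorphic with derivative `wp' l1`. Writing `x_k = g_{β₀}^k(c₁)` and `D_m` for the derivative of
`β ↦ g_β^m(c₁)` at `β₀`, the product and chain rules give `D_1 = x_1 / β₀` and
`D_{m+1} = β₀ ℘′(x_m) D_m + x_{m+1} / β₀`; the claimed expression is the variation-of-constants
solution of this linear recurrence, valid as long as the multipliers `β₀ ℘′(x_k)` do not vanish.
-/

lemma gam3_im_ne_zero : gam3.im ≠ 0 := by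
  unfold gam3
  rw [show 2 * (Real.pi : ℂ) * I / 3 = ((2 * Real.pi / 3 : ℝ) : ℂ) * I by push_cast; ring,
    exp_ofReal_mul_I_im]
  exact (Real.sin_pos_of_pos_of_lt_pi (by positivity) (by linarith [Real.pi_pos])).ne'

lemma linearIndependent_pair_mul_of_im_ne_zero {a w : ℂ} (ha : a ≠ 0) (hw : w.im ≠ 0) :
    LinearIndependent ℝ ![a, w * a] := by
  refine LinearIndependent.pair_iff.mpr fun s t hst => ?_
  have hsum : (s : ℂ) + t * w = 0 := by
    simp only [Complex.real_smul] at hst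
    exact (mul_eq_zero.mp (by linear_combination hst : ((s : ℂ) + t * w) * a = 0)).resolve_right ha
  have ht : t = 0 := by simpa [hw] using congrArg Complex.im hsum
  subst ht
  exact ⟨by simpa using hsum, rfl⟩

noncomputable def trianglePeriodPair (l1 : ℂ) (hl1 : l1 ≠ 0) : PeriodPair :=
  ⟨l1, gam3 * l1, linearIndependent_pair_mul_of_im_ne_zero hl1 gam3_im_ne_zero⟩

section trianglePeriodPair

variable {l1 : ℂ} (hl1 : l1 ≠ 0)
include hl1

lemma latticeEquivProd_symm_trianglePeriodPair (p : ℤ × ℤ) :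
    ((trianglePeriodPair l1 hl1).latticeEquivProd.symm p : ℂ) =
      (p.1 : ℂ) * l1 + (p.2 : ℂ) * (gam3 * l1) :=
  (trianglePeriodPair l1 hl1).latticeEquiv_symm_apply p

lemma lattice_eq_trianglePeriodPair_lattice :
    lattice l1 = ((trianglePeriodPair l1 hl1).lattice : Set ℂ) := by
  ext z
  simp only [lattice, Set.mem_ofPred_eq, SetLike.mem_coe, PeriodPair.mem_lattice]
  exact ⟨fun ⟨l, m, h⟩ => ⟨l, m, h.symm⟩, fun ⟨l, m, h⟩ => ⟨l, m, h.symm⟩⟩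

lemma wp_eq_weierstrassP : wp l1 = (trianglePeriodPair l1 hl1).weierstrassP := by
  ext z
  have hsum := (trianglePeriodPair l1 hl1).latticeEquivProd.symm.toEquiv.hasSum_iff.mpr
    ((trianglePeriodPair l1 hl1).hasSum_weierstrassP z)
  simp only [Function.comp_def, LinearEquiv.coe_toEquiv,
    latticeEquivProd_symm_trianglePeriodPair] at hsum
  rw [← hsum.tsum_eq, hsum.summable.tsum_eq_add_tsum_ite 0]
  simp [wp]

lemma wp'_eq_derivWeierstrassP : wp' l1 = (trianglePeriodPair l1 hl1).derivWeierstrassP := by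
  ext z
  rw [PeriodPair.derivWeierstrassP,
    ← (trianglePeriodPair l1 hl1).latticeEquivProd.symm.toEquiv.tsum_eq]
  simp only [LinearEquiv.coe_toEquiv, latticeEquivProd_symm_trianglePeriodPair, wp']
  rw [← tsum_mul_left]
  simp only [mul_one_div, neg_div, tsum_neg]

lemma hasDerivAt_wp {z : ℂ} (hz : z ∉ lattice l1) : HasDerivAt (wp l1) (wp' l1 z) z := by
  rw [lattice_eq_trianglePeriodPair_lattice hl1] at hz
  rw [wp_eq_weierstrassP hl1, wp'_eq_derivWeierstrassP hl1, ← PeriodPair.deriv_weierstrassP]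
  exact ((trianglePeriodPair l1 hl1).differentiableOn_weierstrassP.differentiableAt
    ((trianglePeriodPair l1 hl1).isClosed_lattice.isOpen_compl.mem_nhds hz)).hasDerivAt

lemma hasDerivAt_orb_succ {β0 c D : ℂ} {m : ℕ} (hβ0 : β0 ≠ 0)
    (hm : orb l1 β0 c m ∉ lattice l1) (hD : HasDerivAt (fun β => orb l1 β c m) D β0) :
    HasDerivAt (fun β => orb l1 β c (m + 1))
      (β0 * wp' l1 (orb l1 β0 c m) * D + 1 / β0 * orb l1 β0 c (m + 1)) β0 := by
  refine ((hasDerivAt_id β0).mul ((hasDerivAt_wp hl1 hm).comp β0 hD)).congr_deriv ?_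
  simp only [orb, id, Function.comp_apply]
  field_simp
  ring

end trianglePeriodPair

section variationOfConstants

open Finset

variable {K : Type*} [Field K] (c : K) (q x : ℕ → K)

/-- The solution of `V (m + 1) = q m * V m + c * x (m + 1)`, `V 1 = c * x 1`. -/
def variationOfConstants (m : ℕ) : K :=
  c * (∏ k ∈ Icc 1 (m - 1), q k) * (x 1 + ∑ k ∈ Icc 2 m, x k / ∏ i ∈ Icc 1 (k - 1), q i)

lemma variationOfConstants_one : variationOfConstants c q x 1 = c * x 1 := by
  simp [variationOfConstants]

lemma variationOfConstants_succ {m : ℕ} (hm : 1 ≤ m) (hq : ∏ i ∈ Icc 1 m, q i ≠ 0) :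
    variationOfConstants c q x (m + 1) = q m * variationOfConstants c q x m + c * x (m + 1) := by
  obtain ⟨j, rfl⟩ := Nat.exists_eq_add_of_le' hm
  have hprod : ∏ i ∈ Icc 1 (j + 1), q i = (∏ i ∈ Icc 1 j, q i) * q (j + 1) :=
    prod_Icc_succ_top (by omega) q
  have hsum : ∑ k ∈ Icc 2 (j + 1 + 1), x k / ∏ i ∈ Icc 1 (k - 1), q i =
      ∑ k ∈ Icc 2 (j + 1), x k / ∏ i ∈ Icc 1 (k - 1), q i + x (j + 2) / ∏ i ∈ Icc 1 (j + 1), q i :=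
    sum_Icc_succ_top (by omega) _
  simp only [variationOfConstants, Nat.add_sub_cancel, hsum]
  rw [hprod] at hq ⊢
  obtain ⟨hP, hqj⟩ := mul_ne_zero_iff.mp hq
  field_simp
  ring

end variationOfConstants

theorem stmt6 (l1 : ℂ) (hl1 : l1 ≠ 0) (n : ℕ) (hn : 2 ≤ n)
    (β0 : ℂ) (hβ0 : β0 ≠ 0)
    (hdef : ∀ k : ℕ, 1 ≤ k → k ≤ n - 1 → orb l1 β0 (l1 / 2) k ∉ lattice l1)
    (hne : ∀ k : ℕ, 1 ≤ k → k ≤ n - 1 → wp' l1 (orb l1 β0 (l1 / 2) k) ≠ 0) :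
    HasDerivAt (fun β => orb l1 β (l1 / 2) n)
      (1 / β0 * (∏ k ∈ Finset.Icc 1 (n - 1), β0 * wp' l1 (orb l1 β0 (l1 / 2) k)) *
        (orb l1 β0 (l1 / 2) 1 +
          ∑ k ∈ Finset.Icc 2 n, orb l1 β0 (l1 / 2) k /
            ∏ i ∈ Finset.Icc 1 (k - 1), (β0 * wp' l1 (orb l1 β0 (l1 / 2) i)))) β0 := by
  set q : ℕ → ℂ := fun k => β0 * wp' l1 (orb l1 β0 (l1 / 2) k)
  suffices ∀ m, 1 ≤ m → m ≤ n → HasDerivAt (fun β => orb l1 β (l1 / 2) m)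
      (variationOfConstants (1 / β0) q (orb l1 β0 (l1 / 2)) m) β0 from this n (by omega) le_rfl
  intro m hm
  induction m, hm using Nat.le_induction with
  | base =>
    intro _
    rw [variationOfConstants_one]
    refine ((hasDerivAt_id β0).mul_const (wp l1 (l1 / 2))).congr_deriv ?_
    simp only [orb]
    field_simp
  | succ m hm ih =>
    intro hmn
    have hq : ∏ i ∈ Finset.Icc 1 m, q i ≠ 0 := Finset.prod_ne_zero_iff.mpr fun i hi => by
      obtain ⟨hi1, him⟩ := Finset.mem_Icc.mp hi
      exact mul_ne_zero hβ0 (hne i hi1 (by omega))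
    rw [variationOfConstants_succ _ _ _ hm hq]
    exact hasDerivAt_orb_succ hl1 hβ0 (hdef m hm (by omega)) (ih (by omega))
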